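/- arXiv:2303.04152 — 2 statements merged into one kernel-verified Lean document; each statement's English description precedes it below -/
import Mathlib

section
/- For all integers m, n with 1 ≤ m < n, the bipartite achievement number of the double star satisfies n + 1 ≤ ba(S_{m,n}) ≤ 2n. -/
namespace AchievementGame

/-- A strategy for the achievement game: given the history of all moves played so far
(earliest first), produce the next move (an edge, i.e. an element of `Sym2`). -/
def Strategy (α : Type*) : Type _ := List (Sym2 α) → Sym2 α

/-- A strategy is valid for the host graph `G` if, whenever some edge of `G` is still
uncolored, it chooses an uncolored edge of `G`. -/
def Strategy.Valid {α : Type*} (G : SimpleGraph α) (s : Strategy α) : Prop :=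
  ∀ l : List (Sym2 α), (∃ e ∈ G.edgeSet, e ∉ l) → s l ∈ G.edgeSet ∧ s l ∉ l

/-- The history of the first `n` moves when Alice plays strategy `σ` and Bob plays
strategy `τ`; Alice moves first and the players alternate. -/
def hist {α : Type*} (σ τ : Strategy α) : ℕ → List (Sym2 α)
  | 0 => []
  | n + 1 => hist σ τ n ++ [(if n % 2 = 0 then σ else τ) (hist σ τ n)]

/-- The `n`-th move (0-indexed): even indices are Alice's (blue) moves,
odd indices are Bob's (red) moves. -/
def move {α : Type*} (σ τ : Strategy α) (n : ℕ) : Sym2 α :=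
  (if n % 2 = 0 then σ else τ) (hist σ τ n)

/-- The set `s` of edges contains a copy of the graph `F`. -/
def HasCopy {α β : Type*} (F : SimpleGraph β) (s : Set (Sym2 α)) : Prop :=
  ∃ f : β ↪ α, ∀ a b, F.Adj a b → s(f a, f b) ∈ s

/-- Alice has a winning strategy in the achievement game `(F, G, +)`: Alice has a valid
strategy such that against every valid strategy of Bob, at some legal move of Alice
(her `(k+1)`-st move, which exists since `2k+1 ≤ |E(G)|`) the blue edges contain a copy
of `F`, while the red edges played strictly before do not. -/
def AliceWins {α β : Type*} (F : SimpleGraph β) (G : SimpleGraph α) : Prop :=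
  ∃ σ : Strategy α, Strategy.Valid G σ ∧ ∀ τ : Strategy α, Strategy.Valid G τ →
    ∃ k : ℕ, 2 * k + 1 ≤ G.edgeSet.ncard ∧
      HasCopy F {e | ∃ i ≤ k, e = move σ τ (2 * i)} ∧
      ¬ HasCopy F {e | ∃ i < k, e = move σ τ (2 * i + 1)}

/-- The matching `mK₂` consisting of `m` pairwise disjoint edges. -/
def matching (m : ℕ) : SimpleGraph (Fin m ⊕ Fin m) :=
  SimpleGraph.fromRel (fun a b => ∃ i, a = Sum.inl i ∧ b = Sum.inr i)

/-- The star `K_{1,m}`: the center `0` joined to `m` leaves. -/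
def star (m : ℕ) : SimpleGraph (Fin (m + 1)) :=
  SimpleGraph.fromRel (fun a _ => a = 0)

/-- The double star `S_{m,n}`: disjoint stars `K_{1,m}` and `K_{1,n}` with an edge
joining their centers `Sum.inl 0` and `Sum.inr 0`. -/
def doubleStar (m n : ℕ) : SimpleGraph (Fin (m + 1) ⊕ Fin (n + 1)) :=
  SimpleGraph.fromRel (fun a b =>
    (a = Sum.inl 0 ∧ ∃ i, b = Sum.inl i) ∨
    (a = Sum.inr 0 ∧ ∃ j, b = Sum.inr j) ∨
    (a = Sum.inl 0 ∧ b = Sum.inr 0))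

/-- The disjoint union `K_{1,m} ∪ nK₂` of a star and a matching. -/
def starMatching (m n : ℕ) : SimpleGraph (Fin (m + 1) ⊕ (Fin n ⊕ Fin n)) :=
  SimpleGraph.fromRel (fun a b =>
    (a = Sum.inl 0 ∧ ∃ i, b = Sum.inl i) ∨
    (∃ i, a = Sum.inr (Sum.inl i) ∧ b = Sum.inr (Sum.inr i)))

end AchievementGame

open AchievementGame

/-!
A blue copy of `S_{m,n}` consists of edges of the host graph, and the centre of the big star has
degree `n + 1`, while every vertex of `K_{N,N}` has degree `N`; hence `n + 1 ≤ N`.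

In `K_{M,M}` with `2n ≤ M`, Alice first claims the edge between `a = inl 0` and `b = inr 0`, and
then in each of her next `m + n` moves a fresh leaf at `a` or at `b`. Bob's `m + n` edges are too
few to contain `S_{m,n}`, which has `m + n + 1` edges. Each centre has `M - 1 ≥ 2n - 1` potential
leaves, so Alice only has to keep Bob from exhausting the centre she grows: while both centres have
fewer than `m` leaves she answers at a centre where Bob has more edges than she has leaves, and
once both have `m` she grows into the big star a centre that Bob has blocked at most `m` times
(one exists, as Bob has then made only `2m + 1` moves).
-/

namespace AchievementGame

open Finset Function

section Copies

variable {α β : Type*} {F : SimpleGraph β}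

theorem HasCopy.mono {s t : Set (Sym2 α)} (h : HasCopy F s) (hst : s ⊆ t) : HasCopy F t :=
  let ⟨f, hf⟩ := h
  ⟨f, fun a b hab => hst (hf a b hab)⟩

theorem HasCopy.ncard_edgeSet_le {s : Set (Sym2 α)} (h : HasCopy F s) (hs : s.Finite) :
    F.edgeSet.ncard ≤ s.ncard := by
  obtain ⟨f, hf⟩ := h
  refine Set.ncard_le_ncard_of_injOn (Sym2.map f) ?_ (Sym2.map.injective f.injective).injOn hs
  rintro ⟨a, b⟩ hab
  exact hf a b hab

theorem HasCopy.isContained {G : SimpleGraph α} (h : HasCopy F G.edgeSet) : F.IsContained G :=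
  let ⟨f, hf⟩ := h
  ⟨⟨⟨f, fun hab => hf _ _ hab⟩, f.injective⟩⟩

end Copies

section Play

variable {α : Type*}

theorem hist_length (σ τ : Strategy α) (k : ℕ) : (hist σ τ k).length = k := by
  induction k with
  | zero => rfl
  | succ k ih => simp [hist, ih]

theorem hist_two_mul_add_two (σ τ : Strategy α) (t : ℕ) :
    hist σ τ (2 * t + 2) = hist σ τ (2 * t) ++ [σ (hist σ τ (2 * t))] ++
      [τ (hist σ τ (2 * t) ++ [σ (hist σ τ (2 * t))])] := by
  simp [hist, Nat.add_mod]

theorem exists_notMem_of_length_lt {G : SimpleGraph α} {l : List (Sym2 α)}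
    (h : l.length < G.edgeSet.ncard) : ∃ e ∈ G.edgeSet, e ∉ l := by
  classical
  by_contra! hl
  have hsub : G.edgeSet ⊆ ↑l.toFinset := fun e he => by simpa using hl e he
  have := (Set.ncard_le_ncard hsub).trans ((Set.ncard_coe_finset _).trans_le l.toFinset_card_le)
  omega

theorem move_mem_edgeSet {G : SimpleGraph α} {σ τ : Strategy α} (hσ : σ.Valid G)
    (hτ : τ.Valid G) {j : ℕ} (hj : j < G.edgeSet.ncard) : move σ τ j ∈ G.edgeSet := by
  have hfree := exists_notMem_of_length_lt (hist_length σ τ j ▸ hj)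
  unfold move
  split_ifs
  exacts [(hσ _ hfree).1, (hτ _ hfree).1]

open Classical in
noncomputable def Strategy.withFallback (G : SimpleGraph α) (p : List (Sym2 α) → Sym2 α) :
    Strategy α := fun l =>
  if p l ∈ G.edgeSet ∧ p l ∉ l then p l
  else if h : ∃ e ∈ G.edgeSet, e ∉ l then h.choose else p l

theorem Strategy.valid_withFallback (G : SimpleGraph α) (p : List (Sym2 α) → Sym2 α) :
    (withFallback G p).Valid G := by
  intro l hl
  unfold withFallback
  split_ifs with hp
  exacts [hp, hl.choose_spec]

theorem Strategy.withFallback_apply {G : SimpleGraph α} {p : List (Sym2 α) → Sym2 α}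
    {l : List (Sym2 α)} (hG : p l ∈ G.edgeSet) (hl : p l ∉ l) : withFallback G p l = p l := by
  unfold withFallback
  rw [if_pos ⟨hG, hl⟩]

theorem AliceWins.hasCopy_edgeSet {F : SimpleGraph β} {G : SimpleGraph α} (h : AliceWins F G) :
    HasCopy F G.edgeSet := by
  obtain ⟨σ, hσ, hwin⟩ := h
  obtain ⟨k, hk, hblue, -⟩ := hwin _ (Strategy.valid_withFallback G σ)
  refine hblue.mono ?_
  rintro e ⟨i, hi, rfl⟩
  exact move_mem_edgeSet hσ (Strategy.valid_withFallback G σ) (by omega)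

end Play

section Alternate

variable {α : Type*}

def takeAlternate : Bool → List α → List α
  | _, [] => []
  | true, e :: l => e :: takeAlternate false l
  | false, _ :: l => takeAlternate true l

theorem takeAlternate_append_singleton (b : Bool) (l : List α) (e : α) :
    takeAlternate b (l ++ [e]) =
      if decide (Even l.length) = b then takeAlternate b l ++ [e] else takeAlternate b l := by
  induction l generalizing b with
  | nil => cases b <;> simp [takeAlternate]
  | cons x l ih =>
    cases b
    · simp [takeAlternate, ih, Nat.even_add_one]
    · simp [takeAlternate, ih, Nat.even_add_one]
      split_ifs <;> simp

theorem mem_takeAlternate_or {x : α} {l : List α} (hx : x ∈ l) :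
    x ∈ takeAlternate true l ∨ x ∈ takeAlternate false l := by
  induction l with
  | nil => simp at hx
  | cons y l ih =>
    rcases List.mem_cons.1 hx with rfl | hx
    · simp [takeAlternate]
    · rcases ih hx with h | h <;> simp [takeAlternate, h]

theorem mem_of_mem_takeAlternate {x : α} {b : Bool} {l : List α} (hx : x ∈ takeAlternate b l) :
    x ∈ l := by
  induction l generalizing b with
  | nil => simp [takeAlternate] at hx
  | cons y l ih => cases b <;> simp only [takeAlternate, List.mem_cons] at hx ⊢ <;> grind

theorem takeAlternate_append_pair {l : List α} (hl : Even l.length) (a e : α) :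
    takeAlternate true (l ++ [a] ++ [e]) = takeAlternate true l ++ [a] ∧
      takeAlternate false (l ++ [a] ++ [e]) = takeAlternate false l ++ [e] := by
  simp only [takeAlternate_append_singleton, List.length_append]
  simp [hl, Nat.even_add_one]

theorem mem_takeAlternate_hist {σ τ : Strategy α} {x : Sym2 α} {N : ℕ}
    (hx : x ∈ takeAlternate true (hist σ τ N)) :
    ∃ i, 2 * i < N ∧ move σ τ (2 * i) = x := by
  induction N with
  | zero => simp [hist, takeAlternate] at hx
  | succ N ih =>
    rw [show hist σ τ (N + 1) = hist σ τ N ++ [move σ τ N] from rfl,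
      takeAlternate_append_singleton, hist_length] at hx
    split_ifs at hx with hN
    · rcases List.mem_append.1 hx with hx | hx
      · obtain ⟨i, hi, rfl⟩ := ih hx
        exact ⟨i, by omega, rfl⟩
      · obtain ⟨i, rfl⟩ := (decide_eq_true_iff.1 hN).two_dvd
        exact ⟨i, by omega, (List.mem_singleton.1 hx).symm⟩
    · obtain ⟨i, hi, rfl⟩ := ih hx
      exact ⟨i, by omega, rfl⟩

theorem setOf_exists_lt_eq_image {β : Type*} (f : ℕ → β) (k : ℕ) :
    {e | ∃ i < k, e = f i} = f '' Set.Iio k := by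
  ext; simp [eq_comm]

end Alternate

section CompleteBipartite

variable {V W : Type*}

theorem ncard_edgeSet_completeBipartiteGraph [Fintype V] [Fintype W] :
    (completeBipartiteGraph V W).edgeSet.ncard = Fintype.card V * Fintype.card W := by
  simp [Set.ncard_def, SimpleGraph.encard_edgeSet_completeBipartiteGraph]

theorem degree_completeBipartiteGraph_inl [Fintype W] (v : V)
    [Fintype ((completeBipartiteGraph V W).neighborSet (Sum.inl v))] :
    (completeBipartiteGraph V W).degree (Sum.inl v) = Fintype.card W := by
  classical
  rw [← SimpleGraph.card_neighborFinset_eq_degree,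
    show (completeBipartiteGraph V W).neighborFinset (Sum.inl v) = univ.map .inr by
      ext p; cases p <;> simp]
  simp

theorem degree_completeBipartiteGraph_inr [Fintype V] (w : W)
    [Fintype ((completeBipartiteGraph V W).neighborSet (Sum.inr w))] :
    (completeBipartiteGraph V W).degree (Sum.inr w) = Fintype.card V := by
  classical
  rw [← SimpleGraph.card_neighborFinset_eq_degree,
    show (completeBipartiteGraph V W).neighborFinset (Sum.inr w) = univ.map .inl by
      ext p; cases p <;> simp]
  simp

end CompleteBipartite

section DoubleStar

variable {m n : ℕ}

theorem doubleStar_adj_inl_zero_inr_zero :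
    (doubleStar m n).Adj (Sum.inl 0) (Sum.inr 0) := by
  simp [doubleStar]

theorem doubleStar_adj_inl_zero_inl_succ (i : Fin m) :
    (doubleStar m n).Adj (Sum.inl 0) (Sum.inl i.succ) := by
  simp [doubleStar, (Fin.succ_ne_zero i).symm]

theorem doubleStar_adj_inr_zero_inr_succ (j : Fin n) :
    (doubleStar m n).Adj (Sum.inr 0) (Sum.inr j.succ) := by
  simp [doubleStar, (Fin.succ_ne_zero j).symm]

theorem le_ncard_edgeSet_doubleStar : m + n + 1 ≤ (doubleStar m n).edgeSet.ncard := by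
  let e : Option (Fin m ⊕ Fin n) → Sym2 (Fin (m + 1) ⊕ Fin (n + 1)) := fun o =>
    o.elim s(Sum.inl 0, Sum.inr 0) (Sum.elim (fun i => s(Sum.inl 0, Sum.inl i.succ))
      (fun j => s(Sum.inr 0, Sum.inr j.succ)))
  have he : ∀ o, e o ∈ (doubleStar m n).edgeSet := by
    rintro (_ | i | j)
    exacts [doubleStar_adj_inl_zero_inr_zero, doubleStar_adj_inl_zero_inl_succ i,
      doubleStar_adj_inr_zero_inr_succ j]
  have hinj : Injective e := by
    rintro (_ | i | j) (_ | i' | j') h <;> simp [e, Fin.succ_ne_zero] at h ⊢ <;> simp_all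
  simpa using Set.ncard_le_ncard_of_injOn e (fun o _ => he o) hinj.injOn (s := Set.univ)

theorem le_degree_doubleStar [Fintype ((doubleStar m n).neighborSet (Sum.inr 0))] :
    n + 1 ≤ (doubleStar m n).degree (Sum.inr 0) := by
  let v : Option (Fin n) → Fin (m + 1) ⊕ Fin (n + 1) := fun o =>
    o.elim (Sum.inl 0) (fun j => Sum.inr j.succ)
  have hv : ∀ o, v o ∈ (doubleStar m n).neighborFinset (Sum.inr 0) := by
    rintro (_ | j)
    exacts [(SimpleGraph.mem_neighborFinset _ _ _).2 doubleStar_adj_inl_zero_inr_zero.symm,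
      (SimpleGraph.mem_neighborFinset _ _ _).2 (doubleStar_adj_inr_zero_inr_succ j)]
  have hinj : Injective v := by
    rintro (_ | j) (_ | j') h <;> simp_all [v]
  rw [← SimpleGraph.card_neighborFinset_eq_degree]
  simpa using Finset.card_le_card_of_injOn v (s := univ) (fun o _ => hv o) hinj.injOn

theorem hasCopy_doubleStar {γ : Type*} {s : Set (Sym2 γ)} (u v : γ) (x : Fin m → γ)
    (y : Fin n → γ) (hinj : Injective (Sum.elim (Fin.cons u x : Fin (m + 1) → γ)
      (Fin.cons v y : Fin (n + 1) → γ)))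
    (huv : s(u, v) ∈ s) (hx : ∀ i, s(u, x i) ∈ s) (hy : ∀ j, s(v, y j) ∈ s) :
    HasCopy (doubleStar m n) s := by
  set f := Sum.elim (Fin.cons u x : Fin (m + 1) → γ) (Fin.cons v y : Fin (n + 1) → γ)
  refine ⟨⟨f, hinj⟩, ?_⟩
  have key : ∀ a b, a ≠ b → ((a = Sum.inl 0 ∧ ∃ i, b = Sum.inl i) ∨
      (a = Sum.inr 0 ∧ ∃ j, b = Sum.inr j) ∨ (a = Sum.inl 0 ∧ b = Sum.inr 0)) →
      s(f a, f b) ∈ s := by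
    rintro a b hab (⟨rfl, i, rfl⟩ | ⟨rfl, j, rfl⟩ | ⟨rfl, rfl⟩)
    · cases i using Fin.cases with
      | zero => exact absurd rfl hab
      | succ i => simpa [f] using hx i
    · cases j using Fin.cases with
      | zero => exact absurd rfl hab
      | succ j => simpa [f] using hy j
    · simpa [f] using huv
  rintro a b ⟨hab, h | h⟩
  exacts [key a b hab h, Sym2.eq_swap ▸ key b a hab.symm h]

end DoubleStar

theorem succ_le_of_aliceWins_doubleStar {m n N : ℕ}
    (h : AliceWins (doubleStar m n) (completeBipartiteGraph (Fin N) (Fin N))) : n + 1 ≤ N := by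
  classical
  obtain ⟨f⟩ := h.hasCopy_edgeSet.isContained
  calc n + 1 ≤ (doubleStar m n).degree (Sum.inr 0) := le_degree_doubleStar
    _ ≤ _ := f.degree_le _
    _ = N := by
      cases f (Sum.inr 0) <;>
        simp [degree_completeBipartiteGraph_inl, degree_completeBipartiteGraph_inr]

section Tally

/- After `t` rounds, `A` and `B` count Alice's leaves at `a` and `b`, and `DA` and `DB` count Bob's
edges at `a` and `b`. -/
abbrev PrefersLeft (m A B DA DB : ℕ) : Prop :=
  m < A ∨ (A < m ∧ (B < m → DB ≤ B)) ∨ (A = m ∧ B = m ∧ DA ≤ m)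

def TallyInv (m t A B DA DB : ℕ) : Prop :=
  A + B + 1 = t ∧ DA + DB ≤ t ∧ (A < m → DA ≤ A + 1) ∧ (B < m → DB ≤ B + 1) ∧
    (m < A → DA ≤ A ∧ B = m) ∧ (m < B → DB ≤ B ∧ A = m)

variable {m n t A B DA DB DA' DB' : ℕ}

theorem tallyInv_one (h : DA + DB ≤ 1) : TallyInv m 1 0 0 DA DB := by
  unfold TallyInv; omega

theorem TallyInv.room_left (hI : TallyInv m t A B DA DB) (hmn : m < n) (ht : t ≤ m + n)
    (hp : PrefersLeft m A B DA DB) : A + DA + 2 ≤ 2 * n := by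
  unfold TallyInv PrefersLeft at *; omega

theorem TallyInv.room_right (hI : TallyInv m t A B DA DB) (hmn : m < n) (ht : t ≤ m + n)
    (hp : ¬ PrefersLeft m A B DA DB) : B + DB + 2 ≤ 2 * n := by
  unfold TallyInv PrefersLeft at *; omega

theorem TallyInv.step_left (hI : TallyInv m t A B DA DB) (hp : PrefersLeft m A B DA DB)
    (hDA : DA ≤ DA') (hDB : DB ≤ DB') (hD : DA' + DB' ≤ DA + DB + 1) :
    TallyInv m (t + 1) (A + 1) B DA' DB' := by
  unfold TallyInv PrefersLeft at *; omega

theorem TallyInv.step_right (hI : TallyInv m t A B DA DB) (hp : ¬ PrefersLeft m A B DA DB)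
    (hDA : DA ≤ DA') (hDB : DB ≤ DB') (hD : DA' + DB' ≤ DA + DB + 1) :
    TallyInv m (t + 1) A (B + 1) DA' DB' := by
  unfold TallyInv PrefersLeft at *; omega

theorem TallyInv.final (hI : TallyInv m (m + n + 1) A B DA DB) (hmn : m < n) :
    (A = n ∧ B = m) ∨ (A = m ∧ B = n) := by
  unfold TallyInv at hI; omega

end Tally

section Strategy

variable {M : ℕ}

/- Centre `true` is `a = inl 0` and centre `false` is `b = inr 0`. `leafVertex c j` is vertex `j`
on the side opposite to centre `c`, so centre `c` itself is `leafVertex (!c) 0`. -/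
def leafVertex : Bool → Fin M → Fin M ⊕ Fin M
  | true, j => Sum.inr j
  | false, i => Sum.inl i

theorem leafVertex_inj {c c' : Bool} {j j' : Fin M} :
    leafVertex c j = leafVertex c' j' ↔ c = c' ∧ j = j' := by
  cases c <;> cases c' <;> simp [leafVertex]

variable [NeZero M]

def leafEdge (c : Bool) (j : Fin M) : Sym2 (Fin M ⊕ Fin M) :=
  s(leafVertex (!c) 0, leafVertex c j)

def centerEdge : Sym2 (Fin M ⊕ Fin M) := s(Sum.inl 0, Sum.inr 0)

theorem leafEdge_zero (c : Bool) : leafEdge c (0 : Fin M) = centerEdge := by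
  cases c <;> simp [leafEdge, centerEdge, leafVertex, Sym2.eq_swap]

theorem leafEdge_inj {c c' : Bool} {j j' : Fin M} (hj : j ≠ 0) :
    leafEdge c j = leafEdge c' j' ↔ c = c' ∧ j = j' := by
  refine ⟨fun h => ?_, by rintro ⟨rfl, rfl⟩; rfl⟩
  rcases Sym2.eq_iff.1 h with ⟨-, h⟩ | ⟨-, h⟩ <;> rw [leafVertex_inj] at h
  · exact h
  · exact absurd h.2 hj

theorem leafEdge_mem_edgeSet (c : Bool) (j : Fin M) :
    leafEdge c j ∈ (completeBipartiteGraph (Fin M) (Fin M)).edgeSet := by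
  cases c <;> simp [leafEdge, leafVertex]

theorem centerEdge_mem_edgeSet :
    (centerEdge : Sym2 (Fin M ⊕ Fin M)) ∈ (completeBipartiteGraph (Fin M) (Fin M)).edgeSet := by
  simp [centerEdge]

def leaves (c : Bool) (l : List (Sym2 (Fin M ⊕ Fin M))) : Finset (Fin M) :=
  {j | j ≠ 0 ∧ leafEdge c j ∈ l}

@[simp]
theorem mem_leaves {c : Bool} {l : List (Sym2 (Fin M ⊕ Fin M))} {j : Fin M} :
    j ∈ leaves c l ↔ j ≠ 0 ∧ leafEdge c j ∈ l := by
  simp [leaves]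

theorem leaves_append (c : Bool) (l l' : List (Sym2 (Fin M ⊕ Fin M))) :
    leaves c (l ++ l') = leaves c l ∪ leaves c l' := by
  ext j
  simp [and_or_left]

theorem leaves_singleton_leafEdge {j : Fin M} (hj : j ≠ 0) (c c' : Bool) :
    leaves c' [leafEdge c j] = if c' = c then {j} else ∅ := by
  ext j'
  have : j' ≠ 0 ∧ leafEdge c' j' = leafEdge c j ↔ c' = c ∧ j' = j :=
    ⟨fun ⟨hj', h⟩ => (leafEdge_inj hj').1 h, by rintro ⟨rfl, rfl⟩; exact ⟨hj, rfl⟩⟩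
  rw [mem_leaves, List.mem_singleton, this]
  split_ifs with h <;> simp [h]

theorem leaves_singleton_centerEdge (c : Bool) :
    leaves c [(centerEdge : Sym2 (Fin M ⊕ Fin M))] = ∅ := by
  ext j
  simp only [mem_leaves, List.mem_singleton, notMem_empty, iff_false, not_and]
  intro hj h
  exact hj ((leafEdge_inj hj).1 (h.trans (leafEdge_zero c).symm)).2

theorem card_leaves_singleton_add_le (e : Sym2 (Fin M ⊕ Fin M)) :
    #(leaves true [e]) + #(leaves false [e]) ≤ 1 := by
  by_cases he : ∃ c, ∃ j ≠ 0, e = leafEdge c j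
  · obtain ⟨c, j, hj, rfl⟩ := he
    cases c <;> simp [leaves_singleton_leafEdge hj]
  · simp only [not_exists, not_and] at he
    have : ∀ c, leaves c [e] = ∅ := fun c => by
      ext j
      simpa [eq_comm] using he c j
    simp [this]

theorem card_leaves_append_add_le (l : List (Sym2 (Fin M ⊕ Fin M))) (e : Sym2 (Fin M ⊕ Fin M)) :
    #(leaves true (l ++ [e])) + #(leaves false (l ++ [e])) ≤
      #(leaves true l) + #(leaves false l) + 1 := by
  simp only [leaves_append]
  have := card_leaves_singleton_add_le e
  have := card_union_le (leaves true l) (leaves true [e])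
  have := card_union_le (leaves false l) (leaves false [e])
  omega

theorem card_leaves_append_leafEdge {l : List (Sym2 (Fin M ⊕ Fin M))} {c : Bool} {j : Fin M}
    (hj : j ≠ 0) (hl : leafEdge c j ∉ l) (c' : Bool) :
    #(leaves c' (l ++ [leafEdge c j])) = #(leaves c' l) + if c' = c then 1 else 0 := by
  rw [leaves_append, leaves_singleton_leafEdge hj]
  split_ifs with h
  · subst h
    rw [union_singleton, card_insert_of_notMem (by simp [hl])]
  · simp

theorem exists_leafEdge_notMem {c : Bool} {l : List (Sym2 (Fin M ⊕ Fin M))}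
    (h : #(leaves c l) + 2 ≤ M) : ∃ j ≠ 0, leafEdge c j ∉ l := by
  by_contra! hl
  have : (univ.erase 0 : Finset (Fin M)) ⊆ leaves c l := fun j hj =>
    mem_leaves.2 ⟨ne_of_mem_erase hj, hl j (ne_of_mem_erase hj)⟩
  have := card_le_card this
  simp at this
  omega

def blueLeaves (c : Bool) (l : List (Sym2 (Fin M ⊕ Fin M))) : Finset (Fin M) :=
  leaves c (takeAlternate true l)

def redLeaves (c : Bool) (l : List (Sym2 (Fin M ⊕ Fin M))) : Finset (Fin M) :=
  leaves c (takeAlternate false l)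

theorem card_leaves_le_blue_add_red (c : Bool) (l : List (Sym2 (Fin M ⊕ Fin M))) :
    #(leaves c l) ≤ #(blueLeaves c l) + #(redLeaves c l) := by
  refine (card_le_card fun j hj => ?_).trans (card_union_le _ _)
  rw [mem_leaves] at hj
  rcases mem_takeAlternate_or hj.2 with h | h <;> simp [blueLeaves, redLeaves, hj.1, h]

def chosenCenter (m : ℕ) (l : List (Sym2 (Fin M ⊕ Fin M))) : Bool :=
  decide (PrefersLeft m #(blueLeaves true l) #(blueLeaves false l) #(redLeaves true l)
    #(redLeaves false l))

noncomputable def aliceMove (m : ℕ) (l : List (Sym2 (Fin M ⊕ Fin M))) :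
    Sym2 (Fin M ⊕ Fin M) :=
  if centerEdge ∈ l then
    leafEdge (chosenCenter m l)
      (Classical.epsilon fun j => j ≠ 0 ∧ leafEdge (chosenCenter m l) j ∉ l)
  else centerEdge

noncomputable def alice (m : ℕ) : Strategy (Fin M ⊕ Fin M) :=
  Strategy.withFallback (completeBipartiteGraph (Fin M) (Fin M)) (aliceMove m)

theorem alice_nil (m : ℕ) : alice (M := M) m [] = centerEdge := by
  have : aliceMove (M := M) m [] = centerEdge := if_neg List.not_mem_nil
  rw [alice, Strategy.withFallback_apply] <;> simp [this, centerEdge_mem_edgeSet]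

theorem alice_eq_leafEdge {m : ℕ} {l : List (Sym2 (Fin M ⊕ Fin M))} (hl : centerEdge ∈ l)
    (hroom : #(leaves (chosenCenter m l) l) + 2 ≤ M) :
    ∃ j ≠ 0, leafEdge (chosenCenter m l) j ∉ l ∧
      alice m l = leafEdge (chosenCenter m l) j := by
  obtain ⟨hj0, hjl⟩ := Classical.epsilon_spec (exists_leafEdge_notMem hroom)
  have hmove : aliceMove m l = leafEdge (chosenCenter m l) _ := if_pos hl
  refine ⟨_, hj0, hjl, ?_⟩
  rw [alice, Strategy.withFallback_apply (by rw [hmove]; exact leafEdge_mem_edgeSet _ _)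
    (by rwa [hmove]), hmove]

def HistInv (m t : ℕ) (l : List (Sym2 (Fin M ⊕ Fin M))) : Prop :=
  centerEdge ∈ l ∧ TallyInv m t #(blueLeaves true l) #(blueLeaves false l) #(redLeaves true l)
    #(redLeaves false l)

variable {m n t : ℕ}

theorem HistInv.room {l : List (Sym2 (Fin M ⊕ Fin M))} (hI : HistInv m t l) (hmn : m < n)
    (hM : 2 * n ≤ M) (ht : t ≤ m + n) : #(leaves (chosenCenter m l) l) + 2 ≤ M := by
  have := card_leaves_le_blue_add_red (chosenCenter m l) l
  cases hc : chosenCenter m l <;> rw [hc] at this <;>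
    simp only [chosenCenter, decide_eq_true_eq, decide_eq_false_iff_not] at hc
  · have := hI.2.room_right hmn ht hc
    omega
  · have := hI.2.room_left hmn ht hc
    omega

theorem HistInv.round {l : List (Sym2 (Fin M ⊕ Fin M))} (hI : HistInv m t l) (hmn : m < n)
    (hM : 2 * n ≤ M) (ht : t ≤ m + n) (hl : Even l.length) (e : Sym2 (Fin M ⊕ Fin M)) :
    HistInv m (t + 1) (l ++ [alice m l] ++ [e]) := by
  obtain ⟨j, hj0, hjl, hmove⟩ := alice_eq_leafEdge hI.1 (hI.room hmn hM ht)
  set c := chosenCenter m l with hc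
  rw [hmove]
  obtain ⟨hblue, hred⟩ := takeAlternate_append_pair hl (leafEdge c j) e
  set l' := l ++ [leafEdge c j] ++ [e]
  have hA (c' : Bool) : #(blueLeaves c' l') = #(blueLeaves c' l) + if c' = c then 1 else 0 := by
    rw [blueLeaves, hblue, card_leaves_append_leafEdge hj0 (hjl ∘ mem_of_mem_takeAlternate)]
    rfl
  have hD (c' : Bool) : #(redLeaves c' l) ≤ #(redLeaves c' l') := by
    rw [redLeaves, redLeaves, hred, leaves_append]
    exact card_le_card subset_union_left
  have hDsum : #(redLeaves true l') + #(redLeaves false l') ≤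
      #(redLeaves true l) + #(redLeaves false l) + 1 := by
    simpa only [redLeaves, hred] using card_leaves_append_add_le (takeAlternate false l) e
  refine ⟨by simp [l', hI.1], ?_⟩
  cases hcv : c <;> simp only [hc, chosenCenter, decide_eq_true_eq, decide_eq_false_iff_not] at hcv
  · simpa [hA, hc, chosenCenter, hcv] using hI.2.step_right hcv (hD true) (hD false) hDsum
  · simpa [hA, hc, chosenCenter, hcv] using hI.2.step_left hcv (hD true) (hD false) hDsum

theorem histInv_hist (hmn : m < n) (hM : 2 * n ≤ M) (τ : Strategy (Fin M ⊕ Fin M)) {t : ℕ}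
    (ht1 : 1 ≤ t) (ht : t ≤ m + n + 1) : HistInv m t (hist (alice m) τ (2 * t)) := by
  induction t, ht1 using Nat.le_induction with
  | base =>
    rw [show 2 * 1 = 2 * 0 + 2 from rfl, hist_two_mul_add_two]
    simp only [hist, List.nil_append, List.singleton_append, alice_nil]
    have hblue (c : Bool) : #(blueLeaves c [centerEdge, τ [centerEdge]]) = 0 := by
      simp [blueLeaves, takeAlternate, leaves_singleton_centerEdge]
    refine ⟨by simp, ?_⟩
    rw [hblue, hblue]
    exact tallyInv_one (by simpa [redLeaves, takeAlternate] using card_leaves_singleton_add_le _)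
  | succ t ht1 ih =>
    rw [show 2 * (t + 1) = 2 * t + 2 by ring, hist_two_mul_add_two]
    exact (ih (by omega)).round hmn hM (by omega) (by simp [hist_length]) _

theorem hasCopy_doubleStar_of_leaves {s : Set (Sym2 (Fin M ⊕ Fin M))}
    {l : List (Sym2 (Fin M ⊕ Fin M))} (hl : ∀ e ∈ l, e ∈ s) (hcenter : centerEdge ∈ s)
    (c : Bool) (hbig : n ≤ #(leaves c l)) (hsmall : m ≤ #(leaves (!c) l)) :
    HasCopy (doubleStar m n) s := by
  let x : Fin m → Fin M := fun i => (leaves (!c) l).orderEmbOfFin rfl (Fin.castLE hsmall i)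
  let y : Fin n → Fin M := fun j => (leaves c l).orderEmbOfFin rfl (Fin.castLE hbig j)
  have hx (i : Fin m) : x i ≠ 0 ∧ leafEdge (!c) (x i) ∈ l :=
    mem_leaves.1 (orderEmbOfFin_mem _ rfl _)
  have hy (j : Fin n) : y j ≠ 0 ∧ leafEdge c (y j) ∈ l :=
    mem_leaves.1 (orderEmbOfFin_mem _ rfl _)
  have hxinj : Injective x := (orderEmbOfFin _ rfl).injective.comp (Fin.castLE_injective _)
  have hyinj : Injective y := (orderEmbOfFin _ rfl).injective.comp (Fin.castLE_injective _)
  refine hasCopy_doubleStar (leafVertex c 0) (leafVertex (!c) 0) (leafVertex (!c) ∘ x)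
    (leafVertex c ∘ y) ?_ ?_ (fun i => hl _ ?_) (fun j => hl _ (hy j).2)
  · refine (Fin.cons_injective_iff.2 ⟨?_, ?_⟩).sumElim
      (Fin.cons_injective_iff.2 ⟨?_, ?_⟩) ?_
    · simp [leafVertex_inj]
    · exact fun i i' h => hxinj (leafVertex_inj.1 h).2
    · simp [leafVertex_inj]
    · exact fun j j' h => hyinj (leafVertex_inj.1 h).2
    · intro a b
      cases a using Fin.cases <;> cases b using Fin.cases <;>
        simp [leafVertex_inj, (hx _).1, Ne.symm (hy _).1]
  · rwa [← leafEdge_zero (!c), leafEdge, Bool.not_not] at hcenter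
  · simpa [leafEdge] using (hx i).2

theorem aliceWins_doubleStar (hmn : m < n) (hM : 2 * n ≤ M) :
    AliceWins (doubleStar m n) (completeBipartiteGraph (Fin M) (Fin M)) := by
  refine ⟨alice m, Strategy.valid_withFallback _ _, fun τ _ => ⟨m + n, ?_, ?_, ?_⟩⟩
  · rw [ncard_edgeSet_completeBipartiteGraph, Fintype.card_fin]
    nlinarith
  · have hblue (e) (he : e ∈ takeAlternate true (hist (alice m) τ (2 * (m + n + 1)))) :
        e ∈ {e | ∃ i ≤ m + n, e = move (alice m) τ (2 * i)} := by
      obtain ⟨i, hi, rfl⟩ := mem_takeAlternate_hist he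
      exact ⟨i, by omega, rfl⟩
    have hcenter : centerEdge ∈ {e | ∃ i ≤ m + n, e = move (alice m) τ (2 * i)} :=
      ⟨0, by omega, (alice_nil m).symm⟩
    rcases (histInv_hist hmn hM τ (t := m + n + 1) (by omega) le_rfl).2.final hmn with
      ⟨hA, hB⟩ | ⟨hA, hB⟩
    · exact hasCopy_doubleStar_of_leaves hblue hcenter true hA.ge hB.ge
    · exact hasCopy_doubleStar_of_leaves hblue hcenter false hB.ge hA.ge
  · intro hred
    rw [setOf_exists_lt_eq_image] at hred
    have hcopy := hred.ncard_edgeSet_le ((Set.finite_Iio _).image _)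
    have himage := Set.ncard_image_le (f := fun i => move (alice m) τ (2 * i + 1))
      (Set.finite_Iio (m + n))
    rw [Set.ncard_Iio_nat] at himage
    have := le_ncard_edgeSet_doubleStar (m := m) (n := n)
    omega

end Strategy

end AchievementGame

theorem stmt4_general (m n : ℕ) (hmn : m < n) :
    (∀ N : ℕ, AliceWins (doubleStar m n) (completeBipartiteGraph (Fin N) (Fin N)) →
      n + 1 ≤ N) ∧
    AliceWins (doubleStar m n) (completeBipartiteGraph (Fin (2 * n)) (Fin (2 * n))) := by
  have : NeZero (2 * n) := ⟨by omega⟩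
  exact ⟨fun N hN => succ_le_of_aliceWins_doubleStar hN, aliceWins_doubleStar hmn le_rfl⟩

/-- For all integers `m, n` with `1 ≤ m < n`, the bipartite achievement number of the
double star satisfies `n + 1 ≤ ba(S_{m,n}) ≤ 2n`: Alice has no winning strategy in
`(S_{m,n}, K_{N,N}, +)` for `N ≤ n`, and Alice has a winning strategy in
`(S_{m,n}, K_{2n,2n}, +)`. -/
theorem stmt4 (m n : ℕ) (hm : 1 ≤ m) (hmn : m < n) :
    (∀ N : ℕ, AliceWins (doubleStar m n) (completeBipartiteGraph (Fin N) (Fin N)) →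
      n + 1 ≤ N) ∧
    AliceWins (doubleStar m n) (completeBipartiteGraph (Fin (2 * n)) (Fin (2 * n))) :=
  stmt4_general m n hmn
end

section
/- Let m, n be integers with 1 ≤ m < n ≤ 2m. Alice has no winning strategy in the achievement game (S_{m,n}, K_{n, 2m+1}, +), played on the complete bipartite graph with parts of sizes n and 2m+1. -/
open AchievementGame Function

/-!
Bob pairs each edge `x v` of `K_{n,2m+1}` with `x (Fin.rev v)` and answers every move of Alice
by its partner whenever that edge is still free. Then Alice never owns two distinct partner
edges, so each left vertex has blue degree at most `m + 1` and each right vertex blue degree at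
most `n`, whereas the centre of the larger star of `S_{m,n}` has degree `n + 1 > m + 1`.
-/

instance Sym2.instNonempty {α : Type*} [Nonempty α] : Nonempty (Sym2 α) :=
  ‹Nonempty α›.map fun a => s(a, a)

theorem Fin.setOf_rev_eq_self_subsingleton (n : ℕ) : {a : Fin n | a.rev = a}.Subsingleton := by
  intro a ha b hb
  simp only [Set.mem_ofPred_eq, Fin.ext_iff, Fin.val_rev] at ha hb
  ext
  omega

namespace AchievementGame

def IsPairFree {β : Type*} (p : β → β) (s : Set β) : Prop :=
  ∀ a ∈ s, p a ∈ s → p a = a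

theorem IsPairFree.two_mul_ncard_le {β : Type*} [Finite β] {p : β → β} (hp : Involutive p)
    (hfix : {a | p a = a}.Subsingleton) {s : Set β} (hs : IsPairFree p s) :
    2 * s.ncard ≤ Nat.card β + 1 := by
  have hinter : (s ∩ p '' s).ncard ≤ 1 := by
    rw [Set.ncard_le_one_iff_subsingleton]
    refine hfix.anti ?_
    rintro _ ⟨ha, b, hb, rfl⟩
    exact hs _ ha (by rwa [hp b])
  have hunion := Set.ncard_union_add_ncard_inter s (p '' s)
  rw [Set.ncard_image_of_injective s hp.injective] at hunion
  have := Set.ncard_le_card (s ∪ p '' s)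
  omega

variable {α : Type*} {G : SimpleGraph α} {σ τ : Strategy α}

theorem hist_succ (σ τ : Strategy α) (t : ℕ) :
    hist σ τ (t + 1) = hist σ τ t ++ [move σ τ t] := rfl

theorem length_hist (σ τ : Strategy α) (t : ℕ) : (hist σ τ t).length = t := by
  induction t with
  | zero => rfl
  | succ t ih => simp [hist_succ, ih]

theorem hist_prefix_hist (σ τ : Strategy α) {s t : ℕ} (h : s ≤ t) :
    hist σ τ s <+: hist σ τ t := by
  induction t, h using Nat.le_induction with
  | base => exact List.prefix_refl _
  | succ t _ ih => exact ih.trans ⟨_, (hist_succ σ τ t).symm⟩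

theorem exists_notMem_hist {t : ℕ} (ht : t < G.edgeSet.ncard) :
    ∃ e ∈ G.edgeSet, e ∉ hist σ τ t := by
  classical
  by_contra! hcov
  have : G.edgeSet.ncard ≤ t :=
    calc G.edgeSet.ncard ≤ ((hist σ τ t).toFinset : Set (Sym2 α)).ncard :=
          Set.ncard_le_ncard (fun e he => by simpa using hcov e he)
      _ ≤ t := by
          rw [Set.ncard_coe_finset]
          simpa [length_hist] using List.toFinset_card_le (hist σ τ t)
  omega

theorem move_mem_edgeSet_of_lt (hσ : σ.Valid G) (hτ : τ.Valid G) {t : ℕ}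
    (ht : t < G.edgeSet.ncard) : move σ τ t ∈ G.edgeSet ∧ move σ τ t ∉ hist σ τ t := by
  unfold move
  split
  · exact hσ _ (exists_notMem_hist ht)
  · exact hτ _ (exists_notMem_hist ht)

noncomputable def freshEdge [Nonempty α] (G : SimpleGraph α) (l : List (Sym2 α)) : Sym2 α :=
  Classical.epsilon fun e => e ∈ G.edgeSet ∧ e ∉ l

theorem freshEdge_spec [Nonempty α] {l : List (Sym2 α)} (h : ∃ e ∈ G.edgeSet, e ∉ l) :
    freshEdge G l ∈ G.edgeSet ∧ freshEdge G l ∉ l :=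
  Classical.epsilon_spec h

open Classical in
noncomputable def pairingStrategy [Nonempty α] (G : SimpleGraph α) (p : Sym2 α → Sym2 α) :
    Strategy α := fun l =>
  match l.getLast? with
  | some e => if p e ∈ G.edgeSet ∧ p e ∉ l then p e else freshEdge G l
  | none => freshEdge G l

section Pairing

variable [Nonempty α] {p : Sym2 α → Sym2 α}

theorem pairingStrategy_valid (G : SimpleGraph α) (p : Sym2 α → Sym2 α) :
    (pairingStrategy G p).Valid G := by
  intro l hl
  unfold pairingStrategy
  split
  · split_ifs with h
    · exact h
    · exact freshEdge_spec hl
  · exact freshEdge_spec hl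

theorem partner_mem_hist (hpG : ∀ e ∈ G.edgeSet, p e ∈ G.edgeSet) (i : ℕ)
    (hi : move σ (pairingStrategy G p) (2 * i) ∈ G.edgeSet) :
    p (move σ (pairingStrategy G p) (2 * i)) ∈ hist σ (pairingStrategy G p) (2 * i + 2) := by
  set τ := pairingStrategy G p
  have hlast : (hist σ τ (2 * i + 1)).getLast? = some (move σ τ (2 * i)) :=
    List.getLast?_concat
  have hreply : move σ τ (2 * i + 1) = τ (hist σ τ (2 * i + 1)) := by
    rw [move, if_neg (by omega)]
  rw [hist_succ, List.mem_append, List.mem_singleton, hreply]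
  by_cases h : p (move σ τ (2 * i)) ∈ hist σ τ (2 * i + 1)
  · exact Or.inl h
  · right
    simp only [τ, pairingStrategy, hlast, if_pos (And.intro (hpG _ hi) h)]

theorem partner_ne_move_of_lt (hpG : ∀ e ∈ G.edgeSet, p e ∈ G.edgeSet) (hσ : σ.Valid G)
    {i j : ℕ} (hij : i < j) (hj : 2 * j < G.edgeSet.ncard) :
    p (move σ (pairingStrategy G p) (2 * i)) ≠ move σ (pairingStrategy G p) (2 * j) := by
  have hvalid := fun t (ht : t < G.edgeSet.ncard) =>
    move_mem_edgeSet_of_lt (t := t) hσ (pairingStrategy_valid G p) ht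
  intro h
  have hcolored := (hist_prefix_hist σ _ (by omega : 2 * i + 2 ≤ 2 * j)).subset
    (partner_mem_hist hpG i (hvalid _ (by omega)).1)
  exact (hvalid _ hj).2 (h ▸ hcolored)

theorem isPairFree_pairingStrategy (hp : Involutive p) (hpG : ∀ e ∈ G.edgeSet, p e ∈ G.edgeSet)
    (hσ : σ.Valid G) {k : ℕ} (hk : 2 * k + 1 ≤ G.edgeSet.ncard) :
    IsPairFree p {e | ∃ i ≤ k, e = move σ (pairingStrategy G p) (2 * i)} := by
  rintro _ ⟨i, hi, rfl⟩ ⟨j, hj, hpij⟩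
  rcases lt_trichotomy i j with hij | rfl | hji
  · exact absurd hpij (partner_ne_move_of_lt hpG hσ hij (by omega))
  · exact hpij
  · refine absurd ?_ (partner_ne_move_of_lt hpG hσ hji (by omega))
    rw [← hpij, hp]

end Pairing

theorem blue_subset_edgeSet (hσ : σ.Valid G) (hτ : τ.Valid G) {k : ℕ}
    (hk : 2 * k + 1 ≤ G.edgeSet.ncard) :
    {e | ∃ i ≤ k, e = move σ τ (2 * i)} ⊆ G.edgeSet := by
  rintro _ ⟨i, hi, rfl⟩
  exact (move_mem_edgeSet_of_lt hσ hτ (by omega)).1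

theorem HasCopy.exists_ncard_neighborSet_le [Finite α] {β : Type*} {F : SimpleGraph β}
    {B : Set (Sym2 α)} (h : HasCopy F B) (b : β) :
    ∃ c, (F.neighborSet b).ncard ≤ {u | s(c, u) ∈ B}.ncard := by
  obtain ⟨f, hf⟩ := h
  exact ⟨f b, Set.ncard_le_ncard_of_injOn f (fun b' hb' => hf b b' hb') f.injective.injOn⟩

theorem le_ncard_neighborSet_doubleStar (m n : ℕ) :
    n + 1 ≤ ((doubleStar m n).neighborSet (Sum.inr 0)).ncard := by
  have hadj : ∀ j : Fin (n + 1),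
      (doubleStar m n).Adj (Sum.inr 0) (if j = 0 then Sum.inl 0 else Sum.inr j) := by
    intro j
    split_ifs with hj <;> simp [doubleStar, Ne.symm, hj]
  have hinj : Injective fun j : Fin (n + 1) =>
      if j = 0 then Sum.inl (0 : Fin (m + 1)) else Sum.inr j := by
    intro a b hab
    by_cases ha : a = 0 <;> by_cases hb : b = 0 <;> simp_all
  simpa using Set.ncard_le_ncard_of_injOn _ (fun j _ => hadj j) hinj.injOn (s := Set.univ)

section CompleteBipartite

variable {β γ : Type*} {B : Set (Sym2 (β ⊕ γ))}

theorem map_sumMap_mem_edgeSet_completeBipartiteGraph (f : β → β) (g : γ → γ)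
    {e : Sym2 (β ⊕ γ)} (he : e ∈ (completeBipartiteGraph β γ).edgeSet) :
    Sym2.map (Sum.map f g) e ∈ (completeBipartiteGraph β γ).edgeSet := by
  induction e with
  | _ a b => rcases a with a | a <;> rcases b with b | b <;> simp_all

theorem ncard_nbrs_inr_le [Finite β] (hB : B ⊆ (completeBipartiteGraph β γ).edgeSet) (v : γ) :
    {u | s(Sum.inr v, u) ∈ B}.ncard ≤ Nat.card β := by
  have hsub : {u | s(Sum.inr v, u) ∈ B} ⊆ Set.range Sum.inl := by
    rintro (x | w) hu
    · exact ⟨x, rfl⟩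
    · simpa using hB hu
  simpa [Set.ncard_range_of_injective Sum.inl_injective] using Set.ncard_le_ncard hsub

theorem two_mul_ncard_nbrs_inl_le [Finite γ] {q : γ → γ} (hq : Involutive q)
    (hfix : {a | q a = a}.Subsingleton) (hB : B ⊆ (completeBipartiteGraph β γ).edgeSet)
    (hpf : IsPairFree (Sym2.map (Sum.map id q)) B) (x : β) :
    2 * {u | s(Sum.inl x, u) ∈ B}.ncard ≤ Nat.card γ + 1 := by
  set S := {v | s(Sum.inl x, Sum.inr v) ∈ B}
  have hsub : {u | s(Sum.inl x, u) ∈ B} ⊆ Sum.inr '' S := by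
    rintro (y | v) hu
    · simpa using hB hu
    · exact ⟨v, hu, rfl⟩
  have hS : IsPairFree q S := fun v hv hqv => by
    simpa using hpf _ hv (by simpa [S] using hqv)
  have := Set.ncard_le_ncard hsub
  rw [Set.ncard_image_of_injective S Sum.inr_injective] at this
  have := hS.two_mul_ncard_le hq hfix
  omega

end CompleteBipartite

end AchievementGame

theorem stmt7_general (m n : ℕ) (hmn : m < n) :
    ¬ AliceWins (doubleStar m n) (completeBipartiteGraph (Fin n) (Fin (2 * m + 1))) := by
  rintro ⟨σ, hσ, hwin⟩
  set G := completeBipartiteGraph (Fin n) (Fin (2 * m + 1))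
  set p : Sym2 (Fin n ⊕ Fin (2 * m + 1)) → _ := Sym2.map (Sum.map id Fin.rev)
  have hp : Involutive p := fun e => by
    simp [p, Sym2.map_map, Sum.map_map, Fin.rev_involutive.comp_self]
  have hpG : ∀ e ∈ G.edgeSet, p e ∈ G.edgeSet := fun e =>
    map_sumMap_mem_edgeSet_completeBipartiteGraph _ _
  obtain ⟨k, hk, hcopy, -⟩ := hwin _ (pairingStrategy_valid G p)
  have hB := blue_subset_edgeSet hσ (pairingStrategy_valid G p) hk
  have hpf := isPairFree_pairingStrategy hp hpG hσ hk
  obtain ⟨c, hc⟩ := hcopy.exists_ncard_neighborSet_le (Sum.inr 0)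
  have hdeg := (le_ncard_neighborSet_doubleStar m n).trans hc
  rcases c with x | v
  · have := two_mul_ncard_nbrs_inl_le Fin.rev_involutive
      (Fin.setOf_rev_eq_self_subsingleton _) hB hpf x
    simp only [Nat.card_fin] at this
    omega
  · have := ncard_nbrs_inr_le hB v
    simp only [Nat.card_fin] at this
    omega

/-- Let `m, n` be integers with `1 ≤ m < n ≤ 2m`. Alice has no winning strategy in the
achievement game `(S_{m,n}, K_{n,2m+1}, +)`. -/
theorem stmt7 (m n : ℕ) (hm : 1 ≤ m) (hmn : m < n) (hn : n ≤ 2 * m) :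
    ¬ AliceWins (doubleStar m n) (completeBipartiteGraph (Fin n) (Fin (2 * m + 1))) :=
  stmt7_general m n hmn
end
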